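/- The average of maximum-multicommodity-flow objectives over any finite set of demand matrices is quasi-concave in the flow vector: for any M ≥ 1 and demand vectors D¹, …, D^M : U → ℝ with D^i u ≥ 0 for all i and u, the function g(x) = (1/M) · Σ_{i=1}^M f_MMCF(x, D^i) satisfies g(λ·x + (1−λ)·x') ≥ min(g(x), g(x')) for all x, x' : T → ℝ with x, x' ≥ 0 componentwise and all λ ∈ [0,1]. -/

import Mathlib

open Finset

/-- Load on edge `e` induced by the flow vector `x`: `Σ_{p ∈ T, e ∈ p} x p`. -/
noncomputable def edgeLoad {E T : Type*} [Fintype T] [DecidableEq E]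
    (tun : T → Finset E) (x : T → ℝ) (e : E) : ℝ :=
  ∑ p, if e ∈ tun p then x p else 0

/-- Normalization constant `γ(x) = max (max_{e ∈ E} load_e(x) / C e) 1`. -/
noncomputable def gamma {E T : Type*} [Fintype E] [Nonempty E] [Fintype T] [DecidableEq E]
    (C : E → ℝ) (tun : T → Finset E) (x : T → ℝ) : ℝ :=
  max (univ.sup' univ_nonempty (fun e => edgeLoad tun x e / C e)) 1

/-- Normalized pair flow `y_u(x) = (Σ_{p ∈ T, pair p = u} x p) / γ(x)`. -/
noncomputable def pairFlow {E T U : Type*} [Fintype E] [Nonempty E] [Fintype T]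
    [DecidableEq E] [DecidableEq U]
    (C : E → ℝ) (tun : T → Finset E) (pair : T → U) (x : T → ℝ) (u : U) : ℝ :=
  (∑ p, if pair p = u then x p else 0) / gamma C tun x

/-- Maximum-multicommodity-flow objective `f_MMCF(x, D) = Σ_{u ∈ U} min (D u) (y_u(x))`. -/
noncomputable def fMMCF {E T U : Type*} [Fintype E] [Nonempty E] [Fintype T] [Fintype U]
    [DecidableEq E] [DecidableEq U]
    (C : E → ℝ) (tun : T → Finset E) (pair : T → U) (D : U → ℝ) (x : T → ℝ) : ℝ :=
  ∑ u, min (D u) (pairFlow C tun pair x u)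

/-! `γ` is convex, being a maximum of linear functions and `1`, while the unnormalized pair flows
`N_u(x) = Σ_{pair p = u} x p` are linear and nonnegative. Hence for `z = λ x + (1 - λ) x'` and
`S = λ γ(x) + (1 - λ) γ(x')` one has `γ(z) ≤ S`, so
`y(z) ≥ (λ N(x) + (1 - λ) N(x')) / S = μ y(x) + (1 - μ) y(x')` with `μ = λ γ(x) / S`.
Each objective `Σ_u min (D u) (y_u)` is concave and monotone in `y`, so the average objective at `z`
is at least the `μ`-combination of its values at `x` and `x'`, hence at least their minimum. -/

theorem sum_ite_smul_add {T : Type*} [Fintype T] (P : T → Prop) [DecidablePred P]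
    (a b : ℝ) (x y : T → ℝ) :
    (∑ p, if P p then (a • x + b • y) p else 0)
      = a * (∑ p, if P p then x p else 0) + b * ∑ p, if P p then y p else 0 := by
  simp only [← sum_filter, mul_sum, ← sum_add_distrib, Pi.add_apply, Pi.smul_apply, smul_eq_mul]

theorem weighted_sum_le_sum {ι : Type*} (s : Finset ι) {μ ν : ℝ} {f g h : ι → ℝ}
    (hfg : ∀ i ∈ s, μ * f i + ν * g i ≤ h i) :
    μ * ∑ i ∈ s, f i + ν * ∑ i ∈ s, g i ≤ ∑ i ∈ s, h i := by
  rw [mul_sum, mul_sum, ← sum_add_distrib]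
  exact sum_le_sum hfg

theorem weighted_min_le_min {μ ν : ℝ} (hμ : 0 ≤ μ) (hν : 0 ≤ ν) (hμν : μ + ν = 1) (c a b : ℝ) :
    μ * min c a + ν * min c b ≤ min c (μ * a + ν * b) :=
  ((concaveOn_const c convex_univ).inf (concaveOn_id convex_univ)).2
    (Set.mem_univ a) (Set.mem_univ b) hμ hν hμν

theorem min_le_weighted {μ ν : ℝ} (hμ : 0 ≤ μ) (hν : 0 ≤ ν) (hμν : μ + ν = 1) (a b : ℝ) :
    min a b ≤ μ * a + ν * b :=
  (segment_subset_uIcc a b ⟨μ, ν, hμ, hν, hμν, rfl⟩).1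

theorem weighted_div_le_div {N N' g g' a b G : ℝ} (hN : 0 ≤ N) (hN' : 0 ≤ N')
    (ha : 0 ≤ a) (hb : 0 ≤ b) (hg : 0 < g) (hg' : 0 < g') (hG : 0 < G) (hGS : G ≤ a * g + b * g') :
    a * g / (a * g + b * g') * (N / g) + b * g' / (a * g + b * g') * (N' / g')
      ≤ (a * N + b * N') / G := by
  have hS : 0 < a * g + b * g' := hG.trans_le hGS
  have hcomb : a * g / (a * g + b * g') * (N / g) + b * g' / (a * g + b * g') * (N' / g')
      = (a * N + b * N') / (a * g + b * g') := by
    field_simp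
  rw [hcomb]
  exact div_le_div_of_nonneg_left (by positivity) hG hGS

section Network

variable {E T : Type*} [Fintype E] [Nonempty E] [Fintype T] [DecidableEq E]
  (C : E → ℝ) (tun : T → Finset E)

theorem one_le_gamma (x : T → ℝ) : 1 ≤ gamma C tun x := le_max_right _ _

theorem edgeLoad_div_le_gamma (x : T → ℝ) (e : E) : edgeLoad tun x e / C e ≤ gamma C tun x :=
  (le_sup' (fun e => edgeLoad tun x e / C e) (mem_univ e)).trans (le_max_left _ _)

theorem gamma_convexOn : ConvexOn ℝ Set.univ (gamma C tun) := by
  refine ⟨convex_univ, fun x _ y _ a b ha hb hab => max_le (sup'_le _ _ fun e _ => ?_) ?_⟩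
  · rw [edgeLoad, sum_ite_smul_add, add_div, mul_div_assoc, mul_div_assoc]
    exact add_le_add (mul_le_mul_of_nonneg_left (edgeLoad_div_le_gamma C tun x e) ha)
      (mul_le_mul_of_nonneg_left (edgeLoad_div_le_gamma C tun y e) hb)
  · calc (1 : ℝ) = a * 1 + b * 1 := by rw [mul_one, mul_one, hab]
      _ ≤ a • gamma C tun x + b • gamma C tun y :=
        add_le_add (mul_le_mul_of_nonneg_left (one_le_gamma C tun x) ha)
          (mul_le_mul_of_nonneg_left (one_le_gamma C tun y) hb)

theorem exists_weights_pairFlow_le {U : Type*} [DecidableEq U] (pair : T → U)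
    {x x' : T → ℝ} (hx : ∀ p, 0 ≤ x p) (hx' : ∀ p, 0 ≤ x' p)
    {a b : ℝ} (ha : 0 ≤ a) (hb : 0 ≤ b) (hab : a + b = 1) :
    ∃ μ ν : ℝ, 0 ≤ μ ∧ 0 ≤ ν ∧ μ + ν = 1 ∧ ∀ u, μ * pairFlow C tun pair x u
      + ν * pairFlow C tun pair x' u ≤ pairFlow C tun pair (a • x + b • x') u := by
  have hγx : 0 < gamma C tun x := one_pos.trans_le (one_le_gamma C tun x)
  have hγx' : 0 < gamma C tun x' := one_pos.trans_le (one_le_gamma C tun x')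
  have hγz : 0 < gamma C tun (a • x + b • x') := one_pos.trans_le (one_le_gamma C tun _)
  have hγconv : gamma C tun (a • x + b • x') ≤ a * gamma C tun x + b * gamma C tun x' :=
    (gamma_convexOn C tun).2 (Set.mem_univ x) (Set.mem_univ x') ha hb hab
  have hS : 0 < a * gamma C tun x + b * gamma C tun x' := hγz.trans_le hγconv
  refine ⟨a * gamma C tun x / (a * gamma C tun x + b * gamma C tun x'),
    b * gamma C tun x' / (a * gamma C tun x + b * gamma C tun x'), by positivity, by positivity,
    by rw [← add_div, div_self hS.ne'], fun u => ?_⟩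
  rw [pairFlow, pairFlow, pairFlow, sum_ite_smul_add]
  exact weighted_div_le_div (sum_nonneg fun p _ => ite_nonneg (hx p) le_rfl)
    (sum_nonneg fun p _ => ite_nonneg (hx' p) le_rfl) ha hb hγx hγx' hγz hγconv

end Network

theorem avg_fMMCF_quasiconcave_general {E T U : Type*} [Fintype E] [Nonempty E] [Fintype T] [Fintype U]
    [DecidableEq E] [DecidableEq U]
    (C : E → ℝ) (tun : T → Finset E)
    (pair : T → U)
    (M : ℕ) (D : Fin M → U → ℝ)
    (x x' : T → ℝ) (hx : ∀ p, 0 ≤ x p) (hx' : ∀ p, 0 ≤ x' p)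
    (lam : ℝ) (hlam0 : 0 ≤ lam) (hlam1 : lam ≤ 1) :
    min ((M : ℝ)⁻¹ * ∑ i, fMMCF C tun pair (D i) x)
        ((M : ℝ)⁻¹ * ∑ i, fMMCF C tun pair (D i) x')
      ≤ (M : ℝ)⁻¹ * ∑ i, fMMCF C tun pair (D i) (fun p => lam * x p + (1 - lam) * x' p) := by
  obtain ⟨μ, ν, hμ, hν, hμν, hflow⟩ := exists_weights_pairFlow_le C tun pair hx hx' hlam0
    (sub_nonneg.2 hlam1) (add_sub_cancel lam 1)
  have hobj : ∀ i, μ * fMMCF C tun pair (D i) x + ν * fMMCF C tun pair (D i) x'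
      ≤ fMMCF C tun pair (D i) (lam • x + (1 - lam) • x') := fun i =>
    weighted_sum_le_sum univ fun u _ =>
      (weighted_min_le_min hμ hν hμν _ _ _).trans (min_le_min_left _ (hflow u))
  calc _ ≤ μ * ((M : ℝ)⁻¹ * ∑ i, fMMCF C tun pair (D i) x)
          + ν * ((M : ℝ)⁻¹ * ∑ i, fMMCF C tun pair (D i) x') := min_le_weighted hμ hν hμν _ _
    _ = (M : ℝ)⁻¹ * (μ * ∑ i, fMMCF C tun pair (D i) x + ν * ∑ i, fMMCF C tun pair (D i) x') := by
      ring
    _ ≤ _ := mul_le_mul_of_nonneg_left (weighted_sum_le_sum univ fun i _ => hobj i) (by positivity)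

/-- The average of maximum-multicommodity-flow objectives over any finite set of
nonnegative demand matrices is quasi-concave in the flow vector. -/
theorem avg_fMMCF_quasiconcave {E T U : Type*} [Fintype E] [Nonempty E] [Fintype T] [Fintype U]
    [DecidableEq E] [DecidableEq U]
    (C : E → ℝ) (hC : ∀ e, 0 < C e) (tun : T → Finset E) (htun : ∀ p, (tun p).Nonempty)
    (pair : T → U)
    (M : ℕ) (hM : 1 ≤ M) (D : Fin M → U → ℝ) (hD : ∀ i u, 0 ≤ D i u)
    (x x' : T → ℝ) (hx : ∀ p, 0 ≤ x p) (hx' : ∀ p, 0 ≤ x' p)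
    (lam : ℝ) (hlam0 : 0 ≤ lam) (hlam1 : lam ≤ 1) :
    min ((M : ℝ)⁻¹ * ∑ i, fMMCF C tun pair (D i) x)
        ((M : ℝ)⁻¹ * ∑ i, fMMCF C tun pair (D i) x')
      ≤ (M : ℝ)⁻¹ * ∑ i, fMMCF C tun pair (D i) (fun p => lam * x p + (1 - lam) * x' p) :=
  avg_fMMCF_quasiconcave_general C tun pair M D x x' hx hx' lam hlam0 hlam1
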